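/- arXiv:math/0110141 — 4 statements merged into one kernel-verified Lean document; each statement's English description precedes it below -/
import Mathlib

section
/- Let 0 < ζ₁ < 1 and x₀ ≥ 1, and let f : [1,∞) → ℝ be differentiable with |f′(x)| ≤ ζ₁·x^{1/2} for all x ≥ x₀. Then for every ζ₂ with ζ₁ < ζ₂ < 1 there exists N₀ such that for all N ≥ N₀: |∫₁^N x^{−1/2}·exp(i·((4/3)·x^{3/2} + 2·f(x))) dx| ≤ 2·ζ₂·N^{1/2}. -/
/-! With `φ = (4/3) x^{3/2} + 2 f` one has `φ' = 2 x^{1/2} + 2 f'`, hence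
`x^{-1/2} e^{iφ} = φ' e^{iφ} / (2x) - f' e^{iφ} / x` for `x > 0`. Since `φ' e^{iφ} / x` is the
derivative of `e^{iφ} / (i x)` up to the absolutely integrable error `e^{iφ} / (i x²)`, its integral
over `[x₀, N]` is at most `2 / x₀`, uniformly in `N`; the second term contributes at most
`∫ ζ₁ x^{-1/2} = 2 ζ₁ (√N - √x₀)`. Together with the trivial bound `x₀ - 1` on `[1, x₀]` this
gives `|∫₁^N …| ≤ x₀ + 2 ζ₁ √N`, and `x₀ ≤ 2 (ζ₂ - ζ₁) √N` once `N` is large. -/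

open MeasureTheory Filter

noncomputable section

theorem hasDerivAt_cexp_I_mul_div {φ : ℝ → ℝ} {φ' x : ℝ} (hx : x ≠ 0)
    (hφ : HasDerivAt φ φ' x) :
    HasDerivAt (fun y : ℝ => Complex.exp (Complex.I * φ y) / (Complex.I * y))
      (φ' * Complex.exp (Complex.I * φ x) / x
        - Complex.exp (Complex.I * φ x) / (Complex.I * x ^ 2)) x := by
  have hxC : (x : ℂ) ≠ 0 := by exact_mod_cast hx
  have hid : HasDerivAt (fun y : ℝ => Complex.I * y) Complex.I x := by
    simpa using (hasDerivAt_id x).ofReal_comp.const_mul Complex.I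
  refine ((hφ.ofReal_comp.const_mul Complex.I).cexp.div hid
    (mul_ne_zero Complex.I_ne_zero hxC)).congr_deriv ?_
  field_simp

theorem norm_integral_deriv_mul_cexp_div_le {φ φ' : ℝ → ℝ} {a b : ℝ} (ha : 0 < a) (hab : a ≤ b)
    (hφ : ∀ x ∈ Set.Icc a b, HasDerivAt φ (φ' x) x)
    (hint : IntervalIntegrable
      (fun x : ℝ => (φ' x : ℂ) * Complex.exp (Complex.I * φ x) / x) volume a b) :
    ‖∫ x in a..b, (φ' x : ℂ) * Complex.exp (Complex.I * φ x) / x‖ ≤ 2 / a := by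
  set E : ℝ → ℂ := fun x => Complex.exp (Complex.I * φ x)
  set r : ℝ → ℂ := fun x => E x / (Complex.I * x ^ 2)
  have hpos : ∀ x ∈ Set.Icc a b, 0 < x := fun x hx => ha.trans_le hx.1
  have hzero : (0 : ℝ) ∉ Set.uIcc a b := by
    rw [Set.uIcc_of_le hab]
    exact fun h => lt_irrefl 0 (hpos 0 h)
  have hnorm : ∀ x, 0 < x → ‖E x / (Complex.I * x)‖ = x⁻¹ := fun x hx => by
    simp [E, Complex.norm_exp_I_mul_ofReal, abs_of_pos hx]
  have hr : IntervalIntegrable r volume a b := by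
    refine ContinuousOn.intervalIntegrable fun x hx => ContinuousAt.continuousWithinAt ?_
    rw [Set.uIcc_of_le hab] at hx
    have hx0 : (x : ℂ) ≠ 0 := by exact_mod_cast (hpos x hx).ne'
    exact ((hφ x hx).ofReal_comp.const_mul Complex.I).cexp.continuousAt.div
      (by fun_prop) (by simp [hx0])
  have hrem : ‖∫ x in a..b, r x‖ ≤ a⁻¹ - b⁻¹ := by
    calc ‖∫ x in a..b, r x‖ ≤ ∫ x in a..b, x ^ (-2 : ℤ) := by
          refine intervalIntegral.norm_integral_le_of_norm_le hab (ae_of_all _ fun x hx => ?_)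
            (intervalIntegral.intervalIntegrable_zpow (Or.inr hzero))
          simp [r, E, Complex.norm_exp_I_mul_ofReal, abs_of_pos (ha.trans hx.1)]
      _ = a⁻¹ - b⁻¹ := by
          rw [integral_zpow (Or.inr ⟨by norm_num, hzero⟩)]
          norm_num
          ring
  have hftc : (∫ x in a..b, (φ' x : ℂ) * E x / x) - ∫ x in a..b, r x
      = E b / (Complex.I * b) - E a / (Complex.I * a) := by
    rw [← intervalIntegral.integral_sub hint hr]
    refine intervalIntegral.integral_eq_sub_of_hasDerivAt (f := fun x => E x / (Complex.I * x))
      (fun x hx => ?_) (hint.sub hr)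
    rw [Set.uIcc_of_le hab] at hx
    exact hasDerivAt_cexp_I_mul_div (hpos x hx).ne' (hφ x hx)
  calc ‖∫ x in a..b, (φ' x : ℂ) * E x / x‖
      = ‖(E b / (Complex.I * b) - E a / (Complex.I * a)) + ∫ x in a..b, r x‖ := by
        rw [← hftc, sub_add_cancel]
    _ ≤ (b⁻¹ + a⁻¹) + (a⁻¹ - b⁻¹) :=
        norm_add_le_of_le (norm_sub_le_of_le (hnorm b (ha.trans_le hab)).le (hnorm a ha).le) hrem
    _ = 2 / a := by ring

theorem rpow_neg_half_eq_rpow_half_div {x : ℝ} (hx : 0 < x) :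
    x ^ (-(1:ℝ)/2) = x ^ ((1:ℝ)/2) / x := by
  rw [← Real.rpow_sub_one hx.ne']
  norm_num

theorem norm_ofReal_mul_cexp_I_mul_div_le {d t x ζ : ℝ} (hx : 0 < x)
    (hd : |d| ≤ ζ * x ^ ((1:ℝ)/2)) :
    ‖(d : ℂ) * (Complex.exp (Complex.I * t) / x)‖ ≤ ζ * x ^ (-(1:ℝ)/2) := by
  simp only [norm_mul, norm_div, Complex.norm_exp_I_mul_ofReal, Complex.norm_real,
    Real.norm_eq_abs, abs_of_pos hx, rpow_neg_half_eq_rpow_half_div hx, ← mul_div_assoc, mul_one]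
  gcongr

def phase (f : ℝ → ℝ) (x : ℝ) : ℝ := (4/3) * x ^ ((3:ℝ)/2) + 2 * f x

def phaseIntegrand (f : ℝ → ℝ) (x : ℝ) : ℂ :=
  ((x ^ (-(1:ℝ)/2) : ℝ) : ℂ) * Complex.exp (Complex.I * (phase f x : ℂ))

theorem hasDerivAt_phase {f : ℝ → ℝ} {x : ℝ} (hx : 0 < x) (hf : DifferentiableAt ℝ f x) :
    HasDerivAt (phase f) (2 * x ^ ((1:ℝ)/2) + 2 * deriv f x) x := by
  refine (((Real.hasDerivAt_rpow_const (p := (3:ℝ)/2) (Or.inl hx.ne')).const_mul (4/3)).add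
    (hf.hasDerivAt.const_mul 2)).congr_deriv ?_
  norm_num
  ring

theorem phaseIntegrand_eq_deriv_phase_sub {f : ℝ → ℝ} {x : ℝ} (hx : 0 < x) :
    phaseIntegrand f x
      = 1/2 * (((2 * x ^ ((1:ℝ)/2) + 2 * deriv f x : ℝ) : ℂ)
          * Complex.exp (Complex.I * phase f x) / x)
        - ((deriv f x : ℝ) : ℂ) * (Complex.exp (Complex.I * phase f x) / x) := by
  rw [phaseIntegrand, rpow_neg_half_eq_rpow_half_div hx]
  push_cast
  ring

theorem continuousOn_cexp_phase_div {f : ℝ → ℝ} {a b : ℝ} (ha : 0 < a)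
    (hf : ∀ x ∈ Set.Icc a b, DifferentiableAt ℝ f x) :
    ContinuousOn (fun x : ℝ => Complex.exp (Complex.I * phase f x) / x) (Set.Icc a b) := by
  refine fun x hx => ContinuousAt.continuousWithinAt ?_
  have hx0 : 0 < x := ha.trans_le hx.1
  exact ((hasDerivAt_phase hx0 (hf x hx)).ofReal_comp.const_mul Complex.I).cexp.continuousAt.div
    (by fun_prop) (by exact_mod_cast hx0.ne')

theorem intervalIntegrable_phaseIntegrand {f : ℝ → ℝ} {a b : ℝ} (ha : 0 < a) (hab : a ≤ b)
    (hf : ∀ x ∈ Set.Icc a b, DifferentiableAt ℝ f x) :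
    IntervalIntegrable (phaseIntegrand f) volume a b := by
  refine ContinuousOn.intervalIntegrable fun x hx => ContinuousAt.continuousWithinAt ?_
  rw [Set.uIcc_of_le hab] at hx
  have hx0 : 0 < x := ha.trans_le hx.1
  exact (Complex.continuous_ofReal.continuousAt.comp
    (Real.continuousAt_rpow_const x _ (Or.inl hx0.ne'))).mul
    ((hasDerivAt_phase hx0 (hf x hx)).ofReal_comp.const_mul Complex.I).cexp.continuousAt

theorem norm_phaseIntegrand_le_one (f : ℝ → ℝ) {x : ℝ} (hx : 1 ≤ x) :
    ‖phaseIntegrand f x‖ ≤ 1 := by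
  rw [phaseIntegrand, norm_mul, Complex.norm_exp_I_mul_ofReal, mul_one, Complex.norm_real,
    Real.norm_of_nonneg (by positivity)]
  exact Real.rpow_le_one_of_one_le_of_nonpos hx (by norm_num)

-- Phrased with `deriv f` rather than an arbitrary `f'`: `measurable_deriv` then makes the
-- amplitude `f' / x` measurable, hence integrable under the bound.
theorem norm_integral_phaseIntegrand_le {f : ℝ → ℝ} {ζ a b : ℝ} (ha : 0 < a) (hab : a ≤ b)
    (hf : ∀ x ∈ Set.Icc a b, DifferentiableAt ℝ f x)
    (hbound : ∀ x ∈ Set.Icc a b, |deriv f x| ≤ ζ * x ^ ((1:ℝ)/2)) :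
    ‖∫ x in a..b, phaseIntegrand f x‖ ≤ 1 / a + 2 * ζ * (b ^ ((1:ℝ)/2) - a ^ ((1:ℝ)/2)) := by
  set φ' : ℝ → ℝ := fun x => 2 * x ^ ((1:ℝ)/2) + 2 * deriv f x
  set g : ℝ → ℂ := fun x => (φ' x : ℂ) * Complex.exp (Complex.I * phase f x) / x
  set p : ℝ → ℂ := fun x => ((deriv f x : ℝ) : ℂ) * (Complex.exp (Complex.I * phase f x) / x)
  have hpos : ∀ x ∈ Set.uIoc a b, 0 < x := fun x hx =>
    ha.trans (by rw [Set.uIoc_of_le hab] at hx; exact hx.1)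
  have hp_le : ∀ x ∈ Set.Icc a b, ‖p x‖ ≤ ζ * x ^ (-(1:ℝ)/2) := fun x hx =>
    norm_ofReal_mul_cexp_I_mul_div_le (ha.trans_le hx.1) (hbound x hx)
  have hbound_int : IntervalIntegrable (fun x => ζ * x ^ (-(1:ℝ)/2)) volume a b :=
    (intervalIntegral.intervalIntegrable_rpow' (by norm_num)).const_mul ζ
  have hp : IntervalIntegrable p volume a b := by
    refine hbound_int.mono_fun' ?_ ?_
    · refine (Complex.measurable_ofReal.comp (measurable_deriv f)).aestronglyMeasurable.mul
        (((continuousOn_cexp_phase_div ha hf).mono ?_).aestronglyMeasurable measurableSet_uIoc)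
      rw [Set.uIoc_of_le hab]
      exact Set.Ioc_subset_Icc_self
    · refine (ae_restrict_mem measurableSet_uIoc).mono fun x hx => hp_le x ?_
      rw [Set.uIoc_of_le hab] at hx
      exact Set.Ioc_subset_Icc_self hx
  have hg : IntervalIntegrable g volume a b := by
    refine (((intervalIntegrable_phaseIntegrand ha hab hf).add hp).const_mul 2).congr
      fun x hx => ?_
    simp only [phaseIntegrand_eq_deriv_phase_sub (hpos x hx), g, p, φ']
    ring
  have hsplit : ∫ x in a..b, phaseIntegrand f x = 1/2 * (∫ x in a..b, g x) - ∫ x in a..b, p x := by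
    rw [← intervalIntegral.integral_const_mul, ← intervalIntegral.integral_sub
      (hg.const_mul _) hp]
    exact intervalIntegral.integral_congr_ae
      (ae_of_all _ fun x hx => phaseIntegrand_eq_deriv_phase_sub (hpos x hx))
  have hrem : ‖∫ x in a..b, p x‖ ≤ 2 * ζ * (b ^ ((1:ℝ)/2) - a ^ ((1:ℝ)/2)) := by
    calc ‖∫ x in a..b, p x‖ ≤ ∫ x in a..b, ζ * x ^ (-(1:ℝ)/2) :=
          intervalIntegral.norm_integral_le_of_norm_le hab
            (ae_of_all _ fun x hx => hp_le x (Set.Ioc_subset_Icc_self hx)) hbound_int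
      _ = 2 * ζ * (b ^ ((1:ℝ)/2) - a ^ ((1:ℝ)/2)) := by
          rw [intervalIntegral.integral_const_mul, integral_rpow (Or.inl (by norm_num))]
          norm_num
          ring
  have hmain : ‖∫ x in a..b, g x‖ ≤ 2 / a := norm_integral_deriv_mul_cexp_div_le ha hab
    (fun x hx => hasDerivAt_phase (ha.trans_le hx.1) (hf x hx)) hg
  rw [hsplit]
  calc _ ≤ 1/2 * (2 / a) + 2 * ζ * (b ^ ((1:ℝ)/2) - a ^ ((1:ℝ)/2)) := by
        refine norm_sub_le_of_le ?_ hrem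
        rw [norm_mul]
        norm_num
        linarith
    _ = _ := by ring
theorem stmt_5_general (ζ₁ : ℝ) (hζ₁pos : 0 < ζ₁)
    (x₀ : ℝ) (hx₀ : 1 ≤ x₀)
    (f f' : ℝ → ℝ)
    (hderiv : ∀ x ≥ (1:ℝ), HasDerivAt f (f' x) x)
    (hbound : ∀ x ≥ x₀, |f' x| ≤ ζ₁ * x ^ ((1:ℝ)/2)) :
    ∀ ζ₂ : ℝ, ζ₁ < ζ₂ → ζ₂ < 1 →
      ∃ N₀ : ℝ, ∀ N ≥ N₀,
        ‖∫ x in (1:ℝ)..N, ((x ^ (-(1:ℝ)/2) : ℝ) : ℂ) *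
            Complex.exp (Complex.I * (((4/3) * x ^ ((3:ℝ)/2) + 2 * f x : ℝ) : ℂ))‖
          ≤ 2 * ζ₂ * N ^ ((1:ℝ)/2) := by
  intro ζ₂ hζ₁₂ _
  have hdiff : ∀ x ∈ Set.Ici (1:ℝ), DifferentiableAt ℝ f x := fun x hx =>
    (hderiv x hx).differentiableAt
  have hint : ∀ a b, 1 ≤ a → a ≤ b → IntervalIntegrable (phaseIntegrand f) volume a b :=
    fun a b ha hab => intervalIntegrable_phaseIntegrand (by linarith) hab
      fun x hx => hdiff x (ha.trans hx.1)
  have hhead : ‖∫ x in (1:ℝ)..x₀, phaseIntegrand f x‖ ≤ x₀ - 1 := by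
    have := intervalIntegral.norm_integral_le_of_norm_le_const fun x hx =>
      norm_phaseIntegrand_le_one f (x := x) (by rw [Set.uIoc_of_le hx₀] at hx; exact hx.1.le)
    rwa [one_mul, abs_of_nonneg (by linarith)] at this
  have htail : ∀ N ≥ x₀, ‖∫ x in x₀..N, phaseIntegrand f x‖
      ≤ 1 / x₀ + 2 * ζ₁ * (N ^ ((1:ℝ)/2) - x₀ ^ ((1:ℝ)/2)) := fun N hN =>
    norm_integral_phaseIntegrand_le (by linarith) hN (fun x hx => hdiff x (hx₀.trans hx.1))
      fun x hx => (hderiv x (hx₀.trans hx.1)).deriv ▸ hbound x hx.1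
  have hlarge : ∀ᶠ N in atTop, x₀ ≤ 2 * (ζ₂ - ζ₁) * N ^ ((1:ℝ)/2) :=
    ((tendsto_rpow_atTop (by norm_num)).const_mul_atTop (by linarith)).eventually_ge_atTop x₀
  obtain ⟨N₀, hN₀⟩ := eventually_atTop.1 (hlarge.and (eventually_ge_atTop x₀))
  refine ⟨N₀, fun N hN => ?_⟩
  obtain ⟨hNlarge, hNx₀⟩ := hN₀ N hN
  have hx₀inv : 1 / x₀ ≤ 1 := by rw [div_le_one (by linarith)]; exact hx₀
  have hx₀sqrt : 0 ≤ ζ₁ * x₀ ^ ((1:ℝ)/2) := by positivity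
  change ‖∫ x in (1:ℝ)..N, phaseIntegrand f x‖ ≤ _
  rw [← intervalIntegral.integral_add_adjacent_intervals (hint 1 x₀ le_rfl hx₀)
    (hint x₀ N hx₀ hNx₀)]
  linarith [norm_add_le_of_le hhead (htail N hNx₀)]

/-- Stationary-phase bound: if `|f'(x)| ≤ ζ₁ x^{1/2}` for large `x` with `ζ₁ < 1`, then for
every `ζ₁ < ζ₂ < 1` one eventually has
`|∫₁^N x^{-1/2} exp(i((4/3)x^{3/2} + 2 f(x))) dx| ≤ 2 ζ₂ N^{1/2}`. -/
theorem stmt_5 (ζ₁ : ℝ) (hζ₁pos : 0 < ζ₁) (hζ₁lt : ζ₁ < 1)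
    (x₀ : ℝ) (hx₀ : 1 ≤ x₀)
    (f f' : ℝ → ℝ)
    (hderiv : ∀ x ≥ (1:ℝ), HasDerivAt f (f' x) x)
    (hbound : ∀ x ≥ x₀, |f' x| ≤ ζ₁ * x ^ ((1:ℝ)/2)) :
    ∀ ζ₂ : ℝ, ζ₁ < ζ₂ → ζ₂ < 1 →
      ∃ N₀ : ℝ, ∀ N ≥ N₀,
        ‖∫ x in (1:ℝ)..N, ((x ^ (-(1:ℝ)/2) : ℝ) : ℂ) *
            Complex.exp (Complex.I * (((4/3) * x ^ ((3:ℝ)/2) + 2 * f x : ℝ) : ℂ))‖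
          ≤ 2 * ζ₂ * N ^ ((1:ℝ)/2) :=
  stmt_5_general ζ₁ hζ₁pos x₀ hx₀ f f' hderiv hbound
end
end

section
/- For every x > 0 the improper integral ∫_x^∞ t^{−1/2}·exp(i·(4/3)·t^{3/2}) dt converges (as the limit of ∫_x^N as N → ∞), and there is a constant C such that for all x ≥ 1: |∫_x^∞ t^{−1/2}·exp(i·(4/3)·t^{3/2}) dt − (i/2)·x^{−1}·exp(i·(4/3)·x^{3/2})| ≤ C·x^{−5/2}. In particular ∫_x^∞ t^{−1/2}·exp(i·(4/3)·t^{3/2}) dt = (i/2)·x^{−1}·exp(i·(4/3)·x^{3/2})·(1 + o(1)) as x → +∞. -/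
/-!
Write `e(t) = exp(i (4/3) t^{3/2})`, so that `e' = 2i t^{1/2} e`. Then
`-(i/2) t^{r-1/2} e(t)` is a primitive of `t^r e(t)` up to the lower-order term
`(i/2)(r - 1/2) t^{r-3/2} e(t)`. One integration by parts (`r = -1/2`) produces the main
term `(i/2) x⁻¹ e(x)` and an absolutely convergent remainder `-(i/2) ∫_x^∞ t^{-2} e(t) dt`; a
second one (`r = -2`) shows that this remainder is `O(x^{-5/2})` rather than the trivial `O(x⁻¹)`.
-/

open MeasureTheory Filter Set

noncomputable section

namespace Chirp

def chirp (t : ℝ) : ℂ := Complex.exp (Complex.I * (((4/3) * t ^ ((3:ℝ)/2) : ℝ) : ℂ))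

def powChirp (s t : ℝ) : ℂ := ((t ^ s : ℝ) : ℂ) * chirp t

lemma norm_chirp (t : ℝ) : ‖chirp t‖ = 1 := by
  simp [chirp, Complex.norm_exp]

lemma norm_powChirp (s : ℝ) {t : ℝ} (ht : 0 ≤ t) : ‖powChirp s t‖ = t ^ s := by
  rw [powChirp, norm_mul, norm_chirp, mul_one, Complex.norm_real, Real.norm_eq_abs,
    abs_of_nonneg (Real.rpow_nonneg ht s)]

lemma continuousOn_powChirp (s : ℝ) : ContinuousOn (powChirp s) (Ioi 0) := by
  refine ContinuousOn.mul ?_ (Continuous.continuousOn ?_)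
  · exact Complex.continuous_ofReal.comp_continuousOn
      (continuousOn_id.rpow_const fun t ht => Or.inl (ne_of_gt ht))
  · unfold chirp; fun_prop (disch := norm_num)

lemma hasDerivAt_chirp {t : ℝ} (ht : 0 < t) :
    HasDerivAt chirp (2 * Complex.I * powChirp (1/2) t) t := by
  have hphase : HasDerivAt (fun t : ℝ => (4/3) * t ^ ((3:ℝ)/2)) (2 * t ^ ((1:ℝ)/2)) t :=
    ((Real.hasDerivAt_rpow_const (p := (3:ℝ)/2) (Or.inl ht.ne')).const_mul
      (4/3 : ℝ)).congr_deriv (by norm_num; ring)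
  refine (hphase.ofReal_comp.const_mul Complex.I).cexp.congr_deriv ?_
  simp only [powChirp, chirp]
  push_cast
  ring

lemma hasDerivAt_powChirp (s : ℝ) {t : ℝ} (ht : 0 < t) :
    HasDerivAt (powChirp s)
      (s * powChirp (s - 1) t + 2 * Complex.I * powChirp (s + 1/2) t) t := by
  have hpow := (Real.hasDerivAt_rpow_const (p := s) (Or.inl ht.ne')).ofReal_comp
  refine (hpow.mul (hasDerivAt_chirp ht)).congr_deriv ?_
  simp only [powChirp, Real.rpow_add ht]
  push_cast
  ring

lemma hasDerivAt_neg_half_I_mul_powChirp (r : ℝ) {t : ℝ} (ht : 0 < t) :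
    HasDerivAt (fun t => -(Complex.I/2) * powChirp (r - 1/2) t)
      (powChirp r t - Complex.I/2 * (r - 1/2 : ℝ) * powChirp (r - 3/2) t) t := by
  refine ((hasDerivAt_powChirp (r - 1/2) ht).const_mul (-(Complex.I/2))).congr_deriv ?_
  rw [sub_add_cancel, show r - 1/2 - 1 = r - 3/2 by ring]
  push_cast
  linear_combination (-powChirp r t) * Complex.I_sq

lemma intervalIntegrable_powChirp (s : ℝ) {x N : ℝ} (hx : 0 < x) (hN : 0 < N) :
    IntervalIntegrable (powChirp s) volume x N :=
  ((continuousOn_powChirp s).mono fun _ ht =>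
    lt_of_lt_of_le (lt_min hx hN) ht.1).intervalIntegrable

lemma integral_powChirp_eq (r : ℝ) {x N : ℝ} (hx : 0 < x) (hN : 0 < N) :
    ∫ t in x..N, powChirp r t = -(Complex.I/2) * powChirp (r - 1/2) N
      + Complex.I/2 * powChirp (r - 1/2) x
      + Complex.I/2 * (r - 1/2 : ℝ) * ∫ t in x..N, powChirp (r - 3/2) t := by
  have hpos : ∀ t ∈ uIcc x N, 0 < t := fun t ht => lt_of_lt_of_le (lt_min hx hN) ht.1
  have hr := intervalIntegrable_powChirp r hx hN
  have hr' := (intervalIntegrable_powChirp (r - 3/2) hx hN).const_mul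
    (Complex.I/2 * (r - 1/2 : ℝ))
  have hftc := intervalIntegral.integral_eq_sub_of_hasDerivAt
    (fun t ht => hasDerivAt_neg_half_I_mul_powChirp r (hpos t ht)) (hr.sub hr')
  rw [intervalIntegral.integral_sub hr hr', intervalIntegral.integral_const_mul] at hftc
  linear_combination hftc

lemma integrableOn_powChirp {s : ℝ} (hs : s < -1) {x : ℝ} (hx : 0 < x) :
    IntegrableOn (powChirp s) (Ioi x) := by
  refine (integrableOn_Ioi_rpow_of_lt hs hx).mono' ?_ ?_
  · exact ((continuousOn_powChirp s).mono fun t ht => hx.trans ht).aestronglyMeasurable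
      measurableSet_Ioi
  · filter_upwards [ae_restrict_mem measurableSet_Ioi] with t ht
    exact (norm_powChirp s (hx.trans ht).le).le

lemma tendsto_powChirp_atTop {s : ℝ} (hs : s < 0) : Tendsto (powChirp s) atTop (nhds 0) := by
  refine squeeze_zero_norm' ?_ (by simpa using tendsto_rpow_neg_atTop (neg_pos.mpr hs))
  filter_upwards [eventually_ge_atTop 0] with t ht
  exact (norm_powChirp s ht).le

lemma tendsto_integral_powChirp {r : ℝ} (hr : r < 1/2) {x : ℝ} (hx : 0 < x) :
    Tendsto (fun N => ∫ t in x..N, powChirp r t) atTop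
      (nhds (Complex.I/2 * powChirp (r - 1/2) x
        + Complex.I/2 * (r - 1/2 : ℝ) * ∫ t in Ioi x, powChirp (r - 3/2) t)) := by
  have hboundary := ((tendsto_powChirp_atTop (sub_neg.mpr hr)).const_mul
    (-(Complex.I/2))).add_const (Complex.I/2 * powChirp (r - 1/2) x)
  have hremainder := (intervalIntegral_tendsto_integral_Ioi x
    (integrableOn_powChirp (s := r - 3/2) (by linarith) hx) tendsto_id).const_mul
    (Complex.I/2 * (r - 1/2 : ℝ))
  rw [mul_zero, zero_add] at hboundary
  refine (hboundary.add hremainder).congr' ?_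
  filter_upwards [eventually_gt_atTop 0] with N hN
  exact (integral_powChirp_eq r hx hN).symm

lemma integral_Ioi_powChirp_eq {r : ℝ} (hr : r < -1) {x : ℝ} (hx : 0 < x) :
    ∫ t in Ioi x, powChirp r t = Complex.I/2 * powChirp (r - 1/2) x
        + Complex.I/2 * (r - 1/2 : ℝ) * ∫ t in Ioi x, powChirp (r - 3/2) t :=
  tendsto_nhds_unique (intervalIntegral_tendsto_integral_Ioi x (integrableOn_powChirp hr hx)
    tendsto_id) (tendsto_integral_powChirp (by linarith) hx)

lemma norm_integral_Ioi_powChirp_le {r : ℝ} (hr : r < -1) {x : ℝ} (hx : 0 < x) :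
    ‖∫ t in Ioi x, powChirp r t‖ ≤ x ^ (r - 1/2) := by
  have hremainder : ‖∫ t in Ioi x, powChirp (r - 3/2) t‖ ≤ x ^ (r - 1/2) / (1/2 - r) := by
    calc ‖∫ t in Ioi x, powChirp (r - 3/2) t‖ ≤ ∫ t in Ioi x, t ^ (r - 3/2) :=
          norm_integral_le_of_norm_le (integrableOn_Ioi_rpow_of_lt (by linarith) hx)
            ((ae_restrict_mem measurableSet_Ioi).mono fun t ht =>
              (norm_powChirp _ (hx.trans ht).le).le)
      _ = x ^ (r - 1/2) / (1/2 - r) := by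
          rw [integral_Ioi_rpow_of_lt (by linarith) hx, show r - 3/2 + 1 = r - 1/2 by ring,
            neg_div, ← div_neg, neg_sub]
  have hmain : ‖Complex.I/2 * powChirp (r - 1/2) x‖ = 1/2 * x ^ (r - 1/2) := by
    rw [norm_mul, norm_powChirp _ hx.le]
    simp
  have hcoeff : ‖Complex.I/2 * ((r - 1/2 : ℝ) : ℂ)‖ = 1/2 * (1/2 - r) := by
    rw [norm_mul, Complex.norm_real, Real.norm_eq_abs, abs_of_neg (by linarith)]
    simp
  have hne : 1/2 - r ≠ 0 := by linarith
  rw [integral_Ioi_powChirp_eq hr hx]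
  calc _ ≤ ‖Complex.I/2 * powChirp (r - 1/2) x‖
          + ‖Complex.I/2 * (r - 1/2 : ℝ) * ∫ t in Ioi x, powChirp (r - 3/2) t‖ :=
        norm_add_le _ _
    _ ≤ 1/2 * x ^ (r - 1/2) + 1/2 * (1/2 - r) * (x ^ (r - 1/2) / (1/2 - r)) := by
        rw [hmain, norm_mul, hcoeff]
        gcongr
        linarith
    _ = x ^ (r - 1/2) := by rw [mul_assoc (1/2 : ℝ), mul_div_cancel₀ _ hne]; ring

/-- `∫_x^∞ t^{-1/2} e(t) dt`, in the form produced by one integration by parts. -/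
def tailIntegral (x : ℝ) : ℂ :=
  Complex.I/2 * powChirp (-1) x - Complex.I/2 * ∫ t in Ioi x, powChirp (-2) t

lemma tendsto_integral_tailIntegral {x : ℝ} (hx : 0 < x) :
    Tendsto (fun N => ∫ t in x..N, powChirp (-(1:ℝ)/2) t) atTop (nhds (tailIntegral x)) := by
  convert tendsto_integral_powChirp (r := -(1:ℝ)/2) (by norm_num) hx using 2
  rw [tailIntegral]
  norm_num
  ring

lemma norm_tailIntegral_sub_le {x : ℝ} (hx : 0 < x) :
    ‖tailIntegral x - Complex.I/2 * (x : ℂ)⁻¹ * chirp x‖ ≤ 1/2 * x ^ (-(5:ℝ)/2) := by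
  have hmain : powChirp (-1) x = (x : ℂ)⁻¹ * chirp x := by
    simp [powChirp, Real.rpow_neg_one]
  have hremainder := norm_integral_Ioi_powChirp_le (r := -2) (by norm_num) hx
  rw [tailIntegral, hmain, mul_assoc, sub_sub_cancel_left, norm_neg, norm_mul]
  norm_num at hremainder ⊢
  linarith

lemma tendsto_tailIntegral_div :
    Tendsto (fun x => tailIntegral x / (Complex.I/2 * (x : ℂ)⁻¹ * chirp x)) atTop
      (nhds 1) := by
  rw [← tendsto_sub_nhds_zero_iff]
  refine squeeze_zero_norm' ?_ (tendsto_rpow_neg_atTop (by norm_num : (0:ℝ) < 3/2))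
  filter_upwards [eventually_gt_atTop 0] with x hx
  have hmain : ‖Complex.I/2 * (x : ℂ)⁻¹ * chirp x‖ = 1/2 * x⁻¹ := by
    simp [norm_chirp, abs_of_pos hx]
  have hne : Complex.I/2 * (x : ℂ)⁻¹ * chirp x ≠ 0 :=
    norm_ne_zero_iff.mp (by rw [hmain]; positivity)
  rw [← div_self hne, ← sub_div, norm_div, hmain, div_le_iff₀ (by positivity)]
  calc _ ≤ 1/2 * x ^ (-(5:ℝ)/2) := norm_tailIntegral_sub_le hx
    _ = x ^ (-(3/2):ℝ) * (1/2 * x⁻¹) := by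
        rw [← Real.rpow_neg_one, mul_left_comm, ← Real.rpow_add hx]
        norm_num

end Chirp

/-- For every `x > 0` the improper integral `∫_x^∞ t^{-1/2} exp(i(4/3)t^{3/2}) dt` converges,
its value `I(x)` satisfies `|I(x) - (i/2) x⁻¹ exp(i(4/3)x^{3/2})| ≤ C x^{-5/2}` for `x ≥ 1`,
and in particular `I(x) = (i/2) x⁻¹ exp(i(4/3)x^{3/2}) (1 + o(1))` as `x → ∞`. -/
theorem stmt_6 :
    ∃ I : ℝ → ℂ,
      (∀ x > (0:ℝ), Tendsto
        (fun N : ℝ => ∫ t in x..N, ((t ^ (-(1:ℝ)/2) : ℝ) : ℂ) *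
          Complex.exp (Complex.I * (((4/3) * t ^ ((3:ℝ)/2) : ℝ) : ℂ)))
        atTop (nhds (I x))) ∧
      (∃ C : ℝ, ∀ x ≥ (1:ℝ),
        ‖I x - (Complex.I / 2) * (x : ℂ)⁻¹ *
            Complex.exp (Complex.I * (((4/3) * x ^ ((3:ℝ)/2) : ℝ) : ℂ))‖
          ≤ C * x ^ (-(5:ℝ)/2)) ∧
      Tendsto (fun x : ℝ => I x / ((Complex.I / 2) * (x : ℂ)⁻¹ *
          Complex.exp (Complex.I * (((4/3) * x ^ ((3:ℝ)/2) : ℝ) : ℂ))))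
        atTop (nhds 1) :=
  ⟨Chirp.tailIntegral, fun _ hx => Chirp.tendsto_integral_tailIntegral hx,
    ⟨1/2, fun _ hx => Chirp.norm_tailIntegral_sub_le (zero_lt_one.trans_le hx)⟩,
    Chirp.tendsto_tailIntegral_div⟩
end
end

section
/- Let q : ℝ → ℝ be Hölder continuous with exponent α for some α ∈ (1/2, 1], i.e. sup_x |q(x)| + sup_{x≠y} |q(x)−q(y)|/|x−y|^α < ∞. Then there exist p with 1 ≤ p < 2, a real number x₀ > 0, and functions q₁, q₂ on (x₀,∞) such that q = q₁ + q₂ on (x₀,∞), q₂ is differentiable and bounded on (x₀,∞) (so that for every ζ > 0 one has |q₂(x)| ≤ ζ·x for all sufficiently large x), and the functions x ↦ q₁(x²) and x ↦ x^{−1}·q₂′(x²) belong to L^p((√x₀, ∞)). -/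
/-!
Take for `q₂` the average of `q` over the window `[t, t + t^(-1/2)]`. Hölder continuity gives
`|q - q₂| ≤ C t^(-α/2)`, and differentiating the average gives
`|q₂'(t)| ≤ C t^((1-α)/2) + C/t`. After the substitution `t = x²`, `q(x²) - q₂(x²)` is bounded
by `C x^(-α)` and `x⁻¹ q₂'(x²)` by `C x^(-α) + C x^(-3)` on `(1, ∞)`. Both bounds lie in `L^p`
as soon as `α p > 1`, and since `α > 1/2` one can take `p = 1 + 1/(2α) < 2`.
-/

open MeasureTheory Filter Set Topology

noncomputable section

lemma continuous_of_abs_sub_le_rpow {q : ℝ → ℝ} {C α : ℝ} (hα : 0 < α)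
    (hq : ∀ x y, |q x - q y| ≤ C * |x - y| ^ α) : Continuous q := by
  refine continuous_iff_continuousAt.2 fun x => ?_
  have hlim : Tendsto (fun y => C * |y - x| ^ α) (𝓝 x) (𝓝 0) := by
    have : Continuous fun y => C * |y - x| ^ α := by fun_prop (disch := exact hα.le)
    simpa [Real.zero_rpow hα.ne'] using this.tendsto x
  exact tendsto_iff_dist_tendsto_zero.2 <|
    squeeze_zero (fun _ => dist_nonneg) (fun y => (Real.dist_eq _ _).trans_le (hq y x)) hlim

lemma memLp_rpow_Ioi {s p c : ℝ} (hp : 0 < p) (hsp : s * p < -1) (hc : 0 < c) :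
    MemLp (fun x : ℝ => x ^ s) (ENNReal.ofReal p) (volume.restrict (Ioi c)) := by
  have hmeas : AEStronglyMeasurable (fun x : ℝ => x ^ s) (volume.restrict (Ioi c)) :=
    (Measurable.pow_const measurable_id s).aestronglyMeasurable
  refine (integrable_norm_rpow_iff hmeas (by simpa using hp) ENNReal.ofReal_ne_top).1 ?_
  refine (integrableOn_Ioi_rpow_of_lt hsp hc).congr_fun (fun x (hx : c < x) => ?_) measurableSet_Ioi
  have hx : 0 < x := hc.trans hx
  rw [ENNReal.toReal_ofReal hp.le, Real.norm_of_nonneg (Real.rpow_nonneg hx.le s),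
    ← Real.rpow_mul hx.le]

lemma memLp_Ioi_of_abs_le {f g : ℝ → ℝ} {p : ENNReal} {c : ℝ}
    (hg : MemLp g p (volume.restrict (Ioi c)))
    (hf : AEStronglyMeasurable f (volume.restrict (Ioi c)))
    (hfg : ∀ x > c, |f x| ≤ g x) : MemLp f p (volume.restrict (Ioi c)) :=
  hg.of_le hf <| (ae_restrict_iff' measurableSet_Ioi).2 <| Eventually.of_forall fun x hx => by
    simpa only [Real.norm_eq_abs] using (hfg x hx).trans (le_abs_self _)

lemma exists_forall_ge_abs_le_mul_of_bounded {f : ℝ → ℝ} {x₀ M ζ : ℝ} (hζ : 0 < ζ)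
    (hM : ∀ x > x₀, |f x| ≤ M) : ∃ R : ℝ, ∀ x ≥ R, |f x| ≤ ζ * x :=
  eventually_atTop.1 <| ((tendsto_id.const_mul_atTop hζ).eventually_ge_atTop M).and
    (eventually_gt_atTop x₀) |>.mono fun x hx => (hM x hx.2).trans hx.1

def movingAverage (q h : ℝ → ℝ) (t : ℝ) : ℝ := (h t)⁻¹ * ∫ s in t..t + h t, q s

section movingAverage

variable {q h : ℝ → ℝ} {t : ℝ}

lemma abs_movingAverage_le {B : ℝ} (hB : ∀ x, |q x| ≤ B) (ht : 0 < h t) :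
    |movingAverage q h t| ≤ B := by
  have hint := intervalIntegral.norm_integral_le_of_norm_le_const (a := t) (b := t + h t)
    (fun s _ => (Real.norm_eq_abs (q s)).trans_le (hB s))
  rw [Real.norm_eq_abs, add_sub_cancel_left, abs_of_pos ht] at hint
  rw [movingAverage, abs_mul, abs_inv, abs_of_pos ht, inv_mul_le_iff₀ ht, mul_comm]
  exact hint

lemma abs_movingAverage_sub_self_le {C α : ℝ} (hα : 0 ≤ α) (hq : Continuous q)
    (hC : ∀ x y, |q x - q y| ≤ C * |x - y| ^ α) (ht : 0 < h t) :
    |movingAverage q h t - q t| ≤ C * h t ^ α := by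
  have hsub : movingAverage q h t - q t = (h t)⁻¹ * ∫ s in t..t + h t, (q s - q t) := by
    rw [intervalIntegral.integral_sub (hq.intervalIntegrable _ _) intervalIntegrable_const,
      intervalIntegral.integral_const, add_sub_cancel_left, smul_eq_mul, movingAverage, mul_sub,
      inv_mul_cancel_left₀ ht.ne']
  have hint := intervalIntegral.norm_integral_le_of_norm_le_const (a := t) (b := t + h t)
    (f := fun s => q s - q t) (C := C * h t ^ α) fun s hs => by
      rw [uIoc_of_le (by linarith)] at hs
      refine (Real.norm_eq_abs _).trans_le ((hC s t).trans ?_)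
      have hC0 : 0 ≤ C := by simpa using (abs_nonneg _).trans (hC 1 0)
      rw [abs_of_pos (sub_pos.2 hs.1)]
      exact mul_le_mul_of_nonneg_left
        (Real.rpow_le_rpow (sub_pos.2 hs.1).le (by linarith [hs.2]) hα) hC0
  rw [Real.norm_eq_abs, add_sub_cancel_left, abs_of_pos ht] at hint
  rw [hsub, abs_mul, abs_inv, abs_of_pos ht, inv_mul_le_iff₀ ht, mul_comm]
  exact hint

lemma hasDerivAt_movingAverage {h' : ℝ} (hq : Continuous q) (hh : HasDerivAt h h' t)
    (ht : h t ≠ 0) :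
    HasDerivAt (movingAverage q h)
      ((q (t + h t) - q t + h' * (q (t + h t) - movingAverage q h t)) / h t) t := by
  set F : ℝ → ℝ := fun u => ∫ s in 0..u, q s
  have hF (u : ℝ) : HasDerivAt F (q u) u := (hq.integral_hasStrictDerivAt 0 u).hasDerivAt
  have hM : movingAverage q h = fun u => (h u)⁻¹ * (F (u + h u) - F u) := funext fun u => by
    rw [movingAverage, intervalIntegral.integral_interval_sub_left (hq.intervalIntegrable _ _)
      (hq.intervalIntegrable _ _)]
  have hderiv : HasDerivAt (fun u => (h u)⁻¹ * (F (u + h u) - F u))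
      (-h' / h t ^ 2 * (F (t + h t) - F t) + (h t)⁻¹ * (q (t + h t) * (1 + h') - q t)) t :=
    (hh.inv ht).mul (((hF _).comp t ((hasDerivAt_id' t).add hh)).sub (hF t))
  rw [hM]
  convert hderiv using 1
  field_simp
  ring

lemma abs_deriv_movingAverage_le {B C α h' : ℝ} (hq : Continuous q) (hB : ∀ x, |q x| ≤ B)
    (hC : ∀ x y, |q x - q y| ≤ C * |x - y| ^ α) (hh : HasDerivAt h h' t) (ht : 0 < h t) :
    |deriv (movingAverage q h) t| ≤ (C * h t ^ α + 2 * B * |h'|) / h t := by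
  rw [(hasDerivAt_movingAverage hq hh ht.ne').deriv, abs_div, abs_of_pos ht]
  gcongr
  have hjump : |q (t + h t) - q t| ≤ C * h t ^ α := by
    simpa [abs_of_pos ht] using hC (t + h t) t
  have hdev : |q (t + h t) - movingAverage q h t| ≤ 2 * B := by
    linarith [abs_sub (q (t + h t)) (movingAverage q h t), hB (t + h t), abs_movingAverage_le hB ht]
  calc |q (t + h t) - q t + h' * (q (t + h t) - movingAverage q h t)|
      ≤ |q (t + h t) - q t| + |h'| * |q (t + h t) - movingAverage q h t| := by
        rw [← abs_mul]; exact abs_add_le _ _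
    _ ≤ C * h t ^ α + |h'| * (2 * B) := by gcongr
    _ = C * h t ^ α + 2 * B * |h'| := by ring

end movingAverage

lemma hasDerivAt_inv_sqrt {t : ℝ} (ht : 0 < t) :
    HasDerivAt (fun u => (√u)⁻¹) (-(2 * √t ^ 3)⁻¹) t := by
  refine ((Real.hasDerivAt_sqrt ht.ne').inv (Real.sqrt_pos.2 ht).ne').congr_deriv ?_
  field_simp

section inverseSqrtWindow

variable {q : ℝ → ℝ} {B C α p x t : ℝ}

lemma differentiableAt_movingAverage_inv_sqrt (hq : Continuous q) (ht : 0 < t) :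
    DifferentiableAt ℝ (movingAverage q fun u => (√u)⁻¹) t :=
  (hasDerivAt_movingAverage hq (hasDerivAt_inv_sqrt ht) (by positivity)).differentiableAt

lemma abs_movingAverage_inv_sqrt_sq_sub_le (hα : 0 ≤ α) (hq : Continuous q)
    (hC : ∀ x y, |q x - q y| ≤ C * |x - y| ^ α) (hx : 0 < x) :
    |movingAverage q (fun u => (√u)⁻¹) (x ^ 2) - q (x ^ 2)| ≤ C * x ^ (-α) := by
  have := abs_movingAverage_sub_self_le (h := fun u => (√u)⁻¹) (t := x ^ 2) hα hq hC
    (by simp [hx])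
  simpa [Real.sqrt_sq hx.le, Real.inv_rpow hx.le, Real.rpow_neg hx.le] using this

lemma abs_inv_mul_deriv_movingAverage_inv_sqrt_sq_le (hq : Continuous q) (hB : ∀ x, |q x| ≤ B)
    (hC : ∀ x y, |q x - q y| ≤ C * |x - y| ^ α) (hx : 0 < x) :
    |x⁻¹ * deriv (movingAverage q fun u => (√u)⁻¹) (x ^ 2)| ≤
      C * x ^ (-α) + B * x ^ (-3 : ℝ) := by
  have hwindow := hasDerivAt_inv_sqrt (pow_pos hx 2)
  rw [Real.sqrt_sq hx.le] at hwindow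
  have := abs_deriv_movingAverage_le hq hB hC hwindow (by simp [hx])
  rw [Real.sqrt_sq hx.le] at this
  rw [abs_mul, abs_inv, abs_of_pos hx]
  calc x⁻¹ * |deriv (movingAverage q fun u => (√u)⁻¹) (x ^ 2)|
      ≤ x⁻¹ * ((C * x⁻¹ ^ α + 2 * B * |(-(2 * x ^ 3)⁻¹)|) / x⁻¹) := by gcongr
    _ = C * x ^ (-α) + B * x ^ (-3 : ℝ) := by
      rw [Real.inv_rpow hx.le, Real.rpow_neg hx.le, Real.rpow_neg hx.le, abs_neg,
        abs_of_pos (by positivity), show (3 : ℝ) = (3 : ℕ) by norm_num, Real.rpow_natCast]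
      field_simp

lemma memLp_sub_movingAverage_inv_sqrt_sq (hq : Continuous q)
    (hC : ∀ x y, |q x - q y| ≤ C * |x - y| ^ α) (hp : 0 < p) (hαp : 1 < α * p) :
    MemLp (fun x : ℝ => q (x ^ 2) - movingAverage q (fun u => (√u)⁻¹) (x ^ 2))
      (ENNReal.ofReal p) (volume.restrict (Ioi 1)) := by
  have hmeas : AEStronglyMeasurable
      (fun x : ℝ => q (x ^ 2) - movingAverage q (fun u => (√u)⁻¹) (x ^ 2))
      (volume.restrict (Ioi 1)) := by
    refine ContinuousOn.aestronglyMeasurable (fun x (hx : 1 < x) => ?_) measurableSet_Ioi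
    have hq₂ := (differentiableAt_movingAverage_inv_sqrt hq (by positivity : 0 < x ^ 2))
    exact ((hq.continuousAt.sub hq₂.continuousAt).comp (f := fun y : ℝ => y ^ 2)
      (continuous_pow 2).continuousAt).continuousWithinAt
  refine memLp_Ioi_of_abs_le
    ((memLp_rpow_Ioi (s := -α) hp (by rw [neg_mul]; linarith) one_pos).const_mul C) hmeas
    fun x hx => ?_
  rw [abs_sub_comm]
  exact abs_movingAverage_inv_sqrt_sq_sub_le (by nlinarith) hq hC (by linarith)

lemma memLp_inv_mul_deriv_movingAverage_inv_sqrt_sq (hq : Continuous q) (hB : ∀ x, |q x| ≤ B)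
    (hC : ∀ x y, |q x - q y| ≤ C * |x - y| ^ α) (hp : 0 < p) (hαp : 1 < α * p)
    (h3p : 1 < 3 * p) :
    MemLp (fun x : ℝ => x⁻¹ * deriv (movingAverage q fun u => (√u)⁻¹) (x ^ 2))
      (ENNReal.ofReal p) (volume.restrict (Ioi 1)) :=
  memLp_Ioi_of_abs_le
    (((memLp_rpow_Ioi (s := -α) hp (by rw [neg_mul]; linarith) one_pos).const_mul C).add
      ((memLp_rpow_Ioi (s := -3) hp (by linarith) one_pos).const_mul B))
    ((measurable_inv.mul ((measurable_deriv _).comp (measurable_id.pow_const 2)))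
      |>.aestronglyMeasurable)
    fun x hx => abs_inv_mul_deriv_movingAverage_inv_sqrt_sq_le hq hB hC (by linarith)

end inverseSqrtWindow

theorem stmt_11_general (q : ℝ → ℝ) (α : ℝ) (hα : 1/2 < α)
    (hHolder : ∃ C : ℝ, (∀ x, |q x| ≤ C) ∧ ∀ x y : ℝ, x ≠ y → |q x - q y| ≤ C * |x - y| ^ α) :
    ∃ p : ℝ, 1 ≤ p ∧ p < 2 ∧
    ∃ x₀ > (0:ℝ), ∃ q₁ q₂ : ℝ → ℝ,
      (∀ x > x₀, q x = q₁ x + q₂ x) ∧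
      (∀ x > x₀, DifferentiableAt ℝ q₂ x) ∧
      (∃ M : ℝ, ∀ x > x₀, |q₂ x| ≤ M) ∧
      (∀ ζ > (0:ℝ), ∃ R : ℝ, ∀ x ≥ R, |q₂ x| ≤ ζ * x) ∧
      MemLp (fun x : ℝ => q₁ (x^2)) (ENNReal.ofReal p)
        (volume.restrict (Set.Ioi (Real.sqrt x₀))) ∧
      MemLp (fun x : ℝ => x⁻¹ * deriv q₂ (x^2)) (ENNReal.ofReal p)
        (volume.restrict (Set.Ioi (Real.sqrt x₀))) := by
  obtain ⟨C, hqC, hC⟩ := hHolder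
  have hα0 : 0 < α := by linarith
  have hHol (x y : ℝ) : |q x - q y| ≤ C * |x - y| ^ α := by
    rcases eq_or_ne x y with rfl | hxy
    · simp [Real.zero_rpow hα0.ne']
    · exact hC x y hxy
  have hq := continuous_of_abs_sub_le_rpow hα0 hHol
  set q₂ := movingAverage q fun u => (√u)⁻¹
  have hq₂_bdd (t : ℝ) (ht : 1 < t) : |q₂ t| ≤ C := abs_movingAverage_le hqC (by positivity)
  have hp1 : 1 ≤ 1 + 1 / (2 * α) := le_add_of_nonneg_right (by positivity)
  have hp2 : 1 / (2 * α) < 1 := by rw [div_lt_one (by positivity)]; linarith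
  have hαp : 1 < α * (1 + 1 / (2 * α)) := by field_simp; linarith
  refine ⟨1 + 1 / (2 * α), hp1, by linarith, 1, one_pos,
    fun t => q t - q₂ t, q₂, fun x _ => by ring,
    fun x hx => differentiableAt_movingAverage_inv_sqrt hq (by linarith), ⟨C, hq₂_bdd⟩,
    fun ζ hζ => exists_forall_ge_abs_le_mul_of_bounded hζ hq₂_bdd, ?_, ?_⟩ <;>
    rw [Real.sqrt_one]
  · exact memLp_sub_movingAverage_inv_sqrt_sq hq hHol (by positivity) hαp
  · exact memLp_inv_mul_deriv_movingAverage_inv_sqrt_sq hq hqC hHol (by positivity) hαp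
      (by linarith)

/-- If `q` is Hölder continuous with exponent `α ∈ (1/2, 1]`, then `q` decomposes on some
`(x₀,∞)` as `q = q₁ + q₂` with `q₂` differentiable and bounded on `(x₀,∞)` (hence for every
`ζ > 0` one has `|q₂(x)| ≤ ζ x` for all sufficiently large `x`), and both `x ↦ q₁(x²)` and
`x ↦ x⁻¹ q₂'(x²)` in `L^p((√x₀,∞))` for some `1 ≤ p < 2`. -/
theorem stmt_11 (q : ℝ → ℝ) (α : ℝ) (hα : 1/2 < α) (hα1 : α ≤ 1)
    (hHolder : ∃ C : ℝ, (∀ x, |q x| ≤ C) ∧ ∀ x y : ℝ, x ≠ y → |q x - q y| ≤ C * |x - y| ^ α) :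
    ∃ p : ℝ, 1 ≤ p ∧ p < 2 ∧
    ∃ x₀ > (0:ℝ), ∃ q₁ q₂ : ℝ → ℝ,
      (∀ x > x₀, q x = q₁ x + q₂ x) ∧
      (∀ x > x₀, DifferentiableAt ℝ q₂ x) ∧
      (∃ M : ℝ, ∀ x > x₀, |q₂ x| ≤ M) ∧
      (∀ ζ > (0:ℝ), ∃ R : ℝ, ∀ x ≥ R, |q₂ x| ≤ ζ * x) ∧
      MemLp (fun x : ℝ => q₁ (x^2)) (ENNReal.ofReal p)
        (volume.restrict (Set.Ioi (Real.sqrt x₀))) ∧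
      MemLp (fun x : ℝ => x⁻¹ * deriv q₂ (x^2)) (ENNReal.ofReal p)
        (volume.restrict (Set.Ioi (Real.sqrt x₀))) :=
  stmt_11_general q α hα hHolder
end
end

section
/- Let M > 0 and let W : [1,∞) → ℝ be measurable with |W(ξ)| ≤ M for all ξ ≥ 1. Then there exists a constant C = C(M) such that for every real-valued function φ on [1,∞) which is continuously differentiable with locally absolutely continuous derivative and satisfies −φ″(ξ) + W(ξ)·φ(ξ) = φ(ξ) for almost every ξ ≥ 1, and for every L ≥ 2: ∫₁^L φ(ξ)² dξ ≤ ∫₁^L (φ(ξ)² + φ′(ξ)²) dξ ≤ C·∫₁^L φ(ξ)² dξ. -/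
/-!
Write `N = |φ| + |φ'|`. Along a solution of `|φ''| ≤ K |φ|`, `N` grows at most by the factor
`growthConst K` over an interval of length one: on a step of length `1 / (2 (1 + K))` the maximum
`S` of `N` satisfies `S ≤ N(v) + S / 2`. If `m` is the maximum of `|φ|` on `[a, a + 1/4]`, the mean
value theorem applied to `φ(t) - t φ'(a)` bounds `N(a)` by `(9 + K) m`, and the growth bound on `φ'`
keeps `|φ| ≥ m / 2` on an interval of length `1 / (2 growthConst K (9 + K))`. Hence `∫ φ²` over an
interval of length between `1/2` and `1` dominates `∫ (φ² + φ'²)` there, and cutting `[1, L]` into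
such intervals gives the theorem.
-/

open MeasureTheory Set

theorem intervalIntegrable_of_continuousOn_Ici {g : ℝ → ℝ} {x₀ a b : ℝ}
    (hg : ContinuousOn g (Ici x₀)) (ha : x₀ ≤ a) (hb : x₀ ≤ b) :
    IntervalIntegrable g volume a b :=
  (hg.mono fun _ ht => (le_min ha hb).trans ht.1).intervalIntegrable

theorem le_pow_mul_of_forall_le_mul {f : ℝ → ℝ} {x₀ δ c : ℝ} (hc : 0 ≤ c) (hδ : 0 ≤ δ)
    (hstep : ∀ v ≥ x₀, ∀ x ∈ Icc v (v + δ), f x ≤ c * f v) (n : ℕ) {v : ℝ} (hv : x₀ ≤ v) :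
    ∀ x ∈ Icc v (v + n * δ), f x ≤ c ^ n * f v := by
  induction n with
  | zero =>
    rintro x ⟨hvx, hxv⟩
    rw [le_antisymm (by simpa using hxv) hvx, pow_zero, one_mul]
  | succ n ih =>
    rintro x ⟨hvx, hxv⟩
    have hy : max v (x - δ) ∈ Icc v (v + n * δ) :=
      ⟨le_max_left _ _, max_le (by nlinarith) (by push_cast at hxv; linarith)⟩
    calc f x ≤ c * f (max v (x - δ)) :=
          hstep _ (hv.trans (le_max_left _ _)) x
            ⟨max_le hvx (by linarith), by linarith [le_max_right v (x - δ)]⟩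
      _ ≤ c * (c ^ n * f v) := mul_le_mul_of_nonneg_left (ih _ hy) hc
      _ = c ^ (n + 1) * f v := by ring

theorem mul_sq_le_integral_sq {f f' : ℝ → ℝ} {a ρ G : ℝ} (hρ : 0 ≤ ρ)
    (hf : ∀ x ∈ Icc a (a + ρ), HasDerivAt f (f' x) x) (hG : ∀ x ∈ Icc a (a + ρ), |f' x| ≤ G)
    (hρG : ρ * G ≤ |f a| / 2) :
    ρ * f a ^ 2 / 4 ≤ ∫ x in a..a + ρ, f x ^ 2 := by
  have ha : a ∈ Icc a (a + ρ) := left_mem_Icc.2 (by linarith)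
  have hG0 : 0 ≤ G := (abs_nonneg _).trans (hG a ha)
  have hlow : ∀ x ∈ Icc a (a + ρ), (f a / 2) ^ 2 ≤ f x ^ 2 := by
    intro x hx
    have hdiff : |f x - f a| ≤ G * |x - a| := by
      simpa only [Real.norm_eq_abs] using
        (convex_Icc a (a + ρ)).norm_image_sub_le_of_norm_hasDerivWithin_le
          (fun y hy => (hf y hy).hasDerivWithinAt) hG ha hx
    have hxa : G * |x - a| ≤ ρ * G := by
      rw [abs_of_nonneg (by linarith [hx.1]), mul_comm]
      exact mul_le_mul_of_nonneg_right (by linarith [hx.2]) hG0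
    have := abs_sub_abs_le_abs_sub (f a) (f x)
    rw [abs_sub_comm] at this
    rw [← sq_abs (f x), div_pow, ← sq_abs (f a)]
    nlinarith [abs_nonneg (f a)]
  have hcont : ContinuousOn (fun x => f x ^ 2) (uIcc a (a + ρ)) := by
    rw [uIcc_of_le (by linarith)]
    exact fun x hx => ((hf x hx).continuousAt.continuousWithinAt).pow 2
  calc ρ * f a ^ 2 / 4 = ∫ _ in a..a + ρ, (f a / 2) ^ 2 := by simp; ring
    _ ≤ ∫ x in a..a + ρ, f x ^ 2 :=
      intervalIntegral.integral_mono_on (by linarith) intervalIntegrable_const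
        hcont.intervalIntegrable hlow

theorem integral_le_mul_integral_of_forall_short {f g : ℝ → ℝ} {a L D : ℝ}
    (hf : ContinuousOn f (Ici a)) (hg : ContinuousOn g (Ici a)) (hL : a + 1 ≤ L)
    (hloc : ∀ s ≥ a, ∀ l ∈ Icc (1 / 2 : ℝ) 1,
      ∫ t in s..s + l, f t ≤ D * ∫ t in s..s + l, g t) :
    ∫ t in a..L, f t ≤ D * ∫ t in a..L, g t := by
  set n := ⌈L - a⌉₊
  have hn : L - a ≤ n := Nat.le_ceil _
  have hn' : (n : ℝ) < L - a + 1 := Nat.ceil_lt_add_one (by linarith)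
  have hn0 : (0 : ℝ) < n := by linarith
  set l := (L - a) / n
  have hl : l ∈ Icc (1 / 2 : ℝ) 1 :=
    ⟨by rw [le_div_iff₀ hn0]; linarith, by rw [div_le_one hn0]; linarith⟩
  set p : ℕ → ℝ := fun k => a + k * l
  have hpa : ∀ k, a ≤ p k := fun k =>
    le_add_of_nonneg_right (mul_nonneg k.cast_nonneg (by linarith [hl.1]))
  have hp : ∀ k, p (k + 1) = p k + l := fun k => by simp only [p]; push_cast; ring
  have hpn : p n = L := by simp only [p, l]; field_simp; ring
  have hsum : ∀ u : ℝ → ℝ, ContinuousOn u (Ici a) →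
      ∑ k ∈ Finset.range n, ∫ t in p k..p k + l, u t = ∫ t in a..L, u t := fun u hu => by
    simpa only [hp, hpn, p, CharP.cast_eq_zero, zero_mul, add_zero] using
      intervalIntegral.sum_integral_adjacent_intervals (μ := volume) (a := p) (n := n)
        fun k _ => intervalIntegrable_of_continuousOn_Ici hu (hpa k) (hpa (k + 1))
  rw [← hsum f hf, ← hsum g hg, Finset.mul_sum]
  exact Finset.sum_le_sum fun k _ => hloc _ (hpa k) l hl

/-- `dφ` is the derivative of `φ` on `[x₀, ∞)`, and `|dφ'| ≤ K |φ|` there, in integrated form. -/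
structure IsDominatedSolution (K x₀ : ℝ) (φ dφ : ℝ → ℝ) : Prop where
  hasDerivAt : ∀ x ≥ x₀, HasDerivAt φ (dφ x) x
  continuousOn_deriv : ContinuousOn dφ (Ici x₀)
  abs_deriv_sub_le : ∀ x ≥ x₀, ∀ y ≥ x, ∀ m, (∀ t ∈ Icc x y, |φ t| ≤ m) →
    |dφ y - dφ x| ≤ K * m * (y - x)

theorem IsDominatedSolution.of_integral {K x₀ : ℝ} {φ dφ w : ℝ → ℝ} (hK : 0 ≤ K)
    (hφ : ∀ x ≥ x₀, HasDerivAt φ (dφ x) x)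
    (hwi : ∀ b ≥ x₀, IntervalIntegrable w volume x₀ b)
    (hdφ : ∀ x ≥ x₀, dφ x = dφ x₀ + ∫ t in x₀..x, w t)
    (hw : ∀ᵐ t, x₀ ≤ t → |w t| ≤ K * |φ t|) :
    IsDominatedSolution K x₀ φ dφ where
  hasDerivAt := hφ
  continuousOn_deriv x hx := by
    have hc : ContinuousOn dφ (Icc x₀ (x + 1)) := by
      have hb : x₀ ≤ x + 1 := by linarith [mem_Ici.1 hx]
      rw [← uIcc_of_le hb]
      refine (continuousOn_const.add
        (intervalIntegral.continuousOn_primitive_interval' (hwi _ hb) left_mem_uIcc)).congr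
          fun t ht => hdφ t ?_
      rw [uIcc_of_le hb] at ht
      exact ht.1
    refine (hc x ⟨hx, by linarith⟩).mono_of_mem_nhdsWithin ?_
    rw [← Ici_inter_Iic]
    exact inter_mem_nhdsWithin _ (Iic_mem_nhds (by linarith))
  abs_deriv_sub_le x hx y hxy m hm := by
    have hdiff : dφ y - dφ x = ∫ t in x..y, w t := by
      rw [hdφ y (hx.trans hxy), hdφ x hx, add_sub_add_left_eq_sub,
        intervalIntegral.integral_interval_sub_left (hwi y (hx.trans hxy)) (hwi x hx)]
    have hbound : ∀ᵐ t, t ∈ Ioc x y → ‖w t‖ ≤ K * m := by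
      filter_upwards [hw] with t ht htxy
      exact (ht (hx.trans htxy.1.le)).trans
        (mul_le_mul_of_nonneg_left (hm t ⟨htxy.1.le, htxy.2⟩) hK)
    calc |dφ y - dφ x| = ‖∫ t in x..y, w t‖ := by rw [hdiff, Real.norm_eq_abs]
      _ ≤ ∫ _ in x..y, K * m :=
        intervalIntegral.norm_integral_le_of_norm_le hxy hbound intervalIntegrable_const
      _ = K * m * (y - x) := by simp; ring

noncomputable def growthConst (K : ℝ) : ℝ := 2 ^ ⌈2 * (1 + K)⌉₊

theorem one_le_growthConst (K : ℝ) : 1 ≤ growthConst K := one_le_pow₀ one_le_two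

namespace IsDominatedSolution

variable {K x₀ : ℝ} {φ dφ : ℝ → ℝ}

theorem continuousOn (hφ : IsDominatedSolution K x₀ φ dφ) : ContinuousOn φ (Ici x₀) :=
  fun x hx => (hφ.hasDerivAt x hx).continuousAt.continuousWithinAt

theorem abs_add_abs_le (hφ : IsDominatedSolution K x₀ φ dφ) {v x S : ℝ} (hv : x₀ ≤ v)
    (hvx : v ≤ x) (hS : ∀ t ∈ Icc v x, |φ t| + |dφ t| ≤ S) :
    |φ x| + |dφ x| ≤ |φ v| + |dφ v| + (1 + K) * S * (x - v) := by
  have hφS : |φ x - φ v| ≤ S * (x - v) := by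
    simpa only [Real.norm_eq_abs, abs_of_nonneg (sub_nonneg.2 hvx)] using
      (convex_Icc v x).norm_image_sub_le_of_norm_hasDerivWithin_le
        (fun t ht => (hφ.hasDerivAt t (hv.trans ht.1)).hasDerivWithinAt)
        (fun t ht => by rw [Real.norm_eq_abs]; linarith [hS t ht, abs_nonneg (φ t)])
        (left_mem_Icc.2 hvx) (right_mem_Icc.2 hvx)
  have hdφS : |dφ x - dφ v| ≤ K * S * (x - v) :=
    hφ.abs_deriv_sub_le v hv x hvx S fun t ht => by linarith [hS t ht, abs_nonneg (dφ t)]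
  linarith [abs_sub_abs_le_abs_sub (φ x) (φ v), abs_sub_abs_le_abs_sub (dφ x) (dφ v)]

theorem abs_add_abs_le_two_mul (hφ : IsDominatedSolution K x₀ φ dφ) (hK : 0 ≤ K) {v x : ℝ}
    (hv : x₀ ≤ v) (hx : x ∈ Icc v (v + 1 / (2 * (1 + K)))) :
    |φ x| + |dφ x| ≤ 2 * (|φ v| + |dφ v|) := by
  set δ := 1 / (2 * (1 + K)) with hδ_def
  have hcont : ContinuousOn (fun t => |φ t| + |dφ t|) (Icc v (v + δ)) :=
    ((hφ.continuousOn.abs).add hφ.continuousOn_deriv.abs).mono fun t ht => hv.trans ht.1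
  obtain ⟨m, hm, hmax⟩ :=
    isCompact_Icc.exists_isMaxOn (nonempty_Icc.2 (hx.1.trans hx.2)) hcont
  have hSm := hφ.abs_add_abs_le hv hm.1 fun t ht => hmax ⟨ht.1, ht.2.trans hm.2⟩
  have hstep : (1 + K) * (m - v) ≤ 1 / 2 :=
    calc (1 + K) * (m - v) ≤ (1 + K) * δ :=
          mul_le_mul_of_nonneg_left (by linarith [hm.2]) (by linarith)
      _ = 1 / 2 := by rw [hδ_def]; field_simp
  have hhalf : (1 + K) * (|φ m| + |dφ m|) * (m - v) ≤ (|φ m| + |dφ m|) / 2 := by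
    nlinarith [abs_nonneg (φ m), abs_nonneg (dφ m)]
  linarith [show |φ x| + |dφ x| ≤ |φ m| + |dφ m| from hmax hx]

theorem abs_add_abs_le_growthConst_mul (hφ : IsDominatedSolution K x₀ φ dφ) (hK : 0 ≤ K)
    {v x : ℝ} (hv : x₀ ≤ v) (hx : x ∈ Icc v (v + 1)) :
    |φ x| + |dφ x| ≤ growthConst K * (|φ v| + |dφ v|) := by
  have hn : 1 ≤ (⌈2 * (1 + K)⌉₊ : ℝ) * (1 / (2 * (1 + K))) := by
    rw [mul_one_div, le_div_iff₀ (by positivity), one_mul]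
    exact Nat.le_ceil _
  exact le_pow_mul_of_forall_le_mul (f := fun t => |φ t| + |dφ t|) zero_le_two (by positivity)
    (fun v hv x hx => hφ.abs_add_abs_le_two_mul hK hv hx) _ hv x ⟨hx.1, by linarith [hx.2]⟩

theorem mul_abs_deriv_le (hφ : IsDominatedSolution K x₀ φ dφ) (hK : 0 ≤ K) {a l m : ℝ}
    (ha : x₀ ≤ a) (hl : 0 ≤ l) (hm : ∀ t ∈ Icc a (a + l), |φ t| ≤ m) :
    l * |dφ a| ≤ 2 * m + K * m * l ^ 2 := by
  have hal : a ≤ a + l := by linarith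
  have hm0 : 0 ≤ m := (abs_nonneg _).trans (hm a (left_mem_Icc.2 hal))
  have hg : ∀ t ∈ Icc a (a + l),
      HasDerivWithinAt (fun t => φ t - t * dφ a) (dφ t - dφ a) (Icc a (a + l)) t := fun t ht => by
    simpa using ((hφ.hasDerivAt t (ha.trans ht.1)).fun_sub
      ((hasDerivAt_id' t).mul_const (dφ a))).hasDerivWithinAt
  have hg' : ∀ t ∈ Icc a (a + l), ‖dφ t - dφ a‖ ≤ K * m * l := fun t ht =>
    (hφ.abs_deriv_sub_le a ha t ht.1 m fun s hs => hm s ⟨hs.1, hs.2.trans ht.2⟩).trans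
      (mul_le_mul_of_nonneg_left (by linarith [ht.2]) (mul_nonneg hK hm0))
  have hmv := (convex_Icc a (a + l)).norm_image_sub_le_of_norm_hasDerivWithin_le hg hg'
    (left_mem_Icc.2 hal) (right_mem_Icc.2 hal)
  simp only [Real.norm_eq_abs, add_sub_cancel_left, abs_of_nonneg hl] at hmv
  have hend := hm (a + l) (right_mem_Icc.2 hal)
  have hstart := hm a (left_mem_Icc.2 hal)
  have hsplit : l * |dφ a| =
      |φ (a + l) - φ a - (φ (a + l) - (a + l) * dφ a - (φ a - a * dφ a))| := by
    rw [show φ (a + l) - φ a - (φ (a + l) - (a + l) * dφ a - (φ a - a * dφ a)) = l * dφ a by ring,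
      abs_mul, abs_of_nonneg hl]
  rw [hsplit, sq]
  linarith [abs_sub (φ (a + l) - φ a) (φ (a + l) - (a + l) * dφ a - (φ a - a * dφ a)),
    abs_sub (φ (a + l)) (φ a)]

theorem sq_abs_add_abs_le_integral (hφ : IsDominatedSolution K x₀ φ dφ) (hK : 0 ≤ K) {a : ℝ}
    (ha : x₀ ≤ a) :
    (|φ a| + |dφ a|) ^ 2 ≤ 8 * growthConst K * (9 + K) ^ 3 * ∫ t in a..a + 1 / 2, φ t ^ 2 := by
  set B := growthConst K
  set A := 9 + K with hA_def
  have hB : 1 ≤ B := one_le_growthConst K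
  have hA : 9 ≤ A := by linarith
  obtain ⟨t₀, ht₀, hmax⟩ := isCompact_Icc.exists_isMaxOn (nonempty_Icc.2 (by linarith))
    ((hφ.continuousOn.mono fun t ht => ha.trans ht.1).abs :
      ContinuousOn (|φ ·|) (Icc a (a + 1 / 4)))
  set m := |φ t₀|
  have hm0 : 0 ≤ m := abs_nonneg _
  have hNa : |φ a| + |dφ a| ≤ A * m := by
    have := hφ.mul_abs_deriv_le hK ha (m := m) (by norm_num) fun t ht => hmax ht
    have hφa : |φ a| ≤ m := hmax ⟨le_rfl, by norm_num⟩
    rw [hA_def]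
    linarith [mul_nonneg hK hm0]
  set ρ := 1 / (2 * B * A) with hρ_def
  have hρ : 0 < ρ := by positivity
  have hρ4 : ρ ≤ 1 / 4 := by
    rw [div_le_div_iff₀ (by positivity) (by norm_num)]
    nlinarith
  have hderiv : ∀ t ∈ Icc t₀ (t₀ + ρ), |dφ t| ≤ B * A * m := fun t ht => by
    have hgrowth := hφ.abs_add_abs_le_growthConst_mul hK ha
      ⟨ht₀.1.trans ht.1, by linarith [ht.2, ht₀.2]⟩
    nlinarith [abs_nonneg (φ t)]
  have hρG : ρ * (B * A * m) ≤ m / 2 := le_of_eq (by rw [hρ_def]; field_simp)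
  have hlower := mul_sq_le_integral_sq hρ.le
    (fun t ht => hφ.hasDerivAt t (ha.trans (ht₀.1.trans ht.1))) hderiv hρG
  calc (|φ a| + |dφ a|) ^ 2 ≤ (A * m) ^ 2 := pow_le_pow_left₀ (by positivity) hNa 2
    _ = 8 * B * A ^ 3 * (ρ * m ^ 2 / 4) := by rw [hρ_def]; field_simp; ring
    _ ≤ 8 * B * A ^ 3 * ∫ t in t₀..t₀ + ρ, φ t ^ 2 := by
      rw [sq_abs]
      exact mul_le_mul_of_nonneg_left hlower (by positivity)
    _ ≤ 8 * B * A ^ 3 * ∫ t in a..a + 1 / 2, φ t ^ 2 := by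
      gcongr
      exact intervalIntegral.integral_mono_interval ht₀.1 (by linarith) (by linarith [ht₀.2])
        (ae_of_all _ fun t => sq_nonneg (φ t))
        (intervalIntegrable_of_continuousOn_Ici (hφ.continuousOn.pow 2) ha (by linarith))

theorem continuousOn_sq_add_sq (hφ : IsDominatedSolution K x₀ φ dφ) :
    ContinuousOn (fun t => φ t ^ 2 + dφ t ^ 2) (Ici x₀) :=
  (hφ.continuousOn.pow 2).add (hφ.continuousOn_deriv.pow 2)

theorem integral_sq_add_sq_le (hφ : IsDominatedSolution K x₀ φ dφ) (hK : 0 ≤ K) {a l : ℝ}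
    (ha : x₀ ≤ a) (hl : l ∈ Icc (1 / 2 : ℝ) 1) :
    ∫ t in a..a + l, (φ t ^ 2 + dφ t ^ 2) ≤
      8 * growthConst K ^ 3 * (9 + K) ^ 3 * ∫ t in a..a + l, φ t ^ 2 := by
  set B := growthConst K
  have hB : 1 ≤ B := one_le_growthConst K
  have hpt : ∀ t ∈ Icc a (a + l), φ t ^ 2 + dφ t ^ 2 ≤ (B * (|φ a| + |dφ a|)) ^ 2 :=
    fun t ht => by
      have hgrowth := hφ.abs_add_abs_le_growthConst_mul hK ha ⟨ht.1, by linarith [ht.2, hl.2]⟩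
      calc φ t ^ 2 + dφ t ^ 2 ≤ (|φ t| + |dφ t|) ^ 2 := by
            rw [← sq_abs (φ t), ← sq_abs (dφ t)]
            nlinarith [abs_nonneg (φ t), abs_nonneg (dφ t)]
        _ ≤ (B * (|φ a| + |dφ a|)) ^ 2 := pow_le_pow_left₀ (by positivity) hgrowth 2
  calc ∫ t in a..a + l, (φ t ^ 2 + dφ t ^ 2)
      ≤ ∫ _ in a..a + l, (B * (|φ a| + |dφ a|)) ^ 2 :=
        intervalIntegral.integral_mono_on (by linarith [hl.1])
          (intervalIntegrable_of_continuousOn_Ici hφ.continuousOn_sq_add_sq ha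
            (by linarith [hl.1]))
          intervalIntegrable_const hpt
    _ = l * (B ^ 2 * (|φ a| + |dφ a|) ^ 2) := by
      rw [intervalIntegral.integral_const, smul_eq_mul, add_sub_cancel_left, mul_pow]
    _ ≤ B ^ 2 * (|φ a| + |dφ a|) ^ 2 := mul_le_of_le_one_left (by positivity) hl.2
    _ ≤ B ^ 2 * (8 * B * (9 + K) ^ 3 * ∫ t in a..a + 1 / 2, φ t ^ 2) := by
      gcongr
      exact hφ.sq_abs_add_abs_le_integral hK ha
    _ ≤ B ^ 2 * (8 * B * (9 + K) ^ 3 * ∫ t in a..a + l, φ t ^ 2) := by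
      gcongr
      exact intervalIntegral.integral_mono_interval le_rfl (by norm_num) (by linarith [hl.1])
        (ae_of_all _ fun t => sq_nonneg (φ t))
        (intervalIntegrable_of_continuousOn_Ici (hφ.continuousOn.pow 2) ha (by linarith [hl.1]))
    _ = 8 * B ^ 3 * (9 + K) ^ 3 * ∫ t in a..a + l, φ t ^ 2 := by ring

end IsDominatedSolution

theorem abs_le_add_one_mul_of_neg_add_mul_eq {w W φ M : ℝ} (hode : -w + W * φ = φ)
    (hW : |W| ≤ M) : |w| ≤ (M + 1) * |φ| := by
  rw [show w = (W - 1) * φ by linarith, abs_mul]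
  gcongr
  exact (abs_sub _ _).trans (by rw [abs_one]; linarith)

theorem stmt_15_general (M : ℝ) :
    ∃ C : ℝ, ∀ W φ dφ w : ℝ → ℝ,
      Measurable W → (∀ ξ ≥ (1:ℝ), |W ξ| ≤ M) →
      (∀ ξ ≥ (1:ℝ), HasDerivAt φ (dφ ξ) ξ) →
      (∀ a ≥ (1:ℝ), ∀ b ≥ (1:ℝ), IntervalIntegrable w volume a b) →
      (∀ ξ ≥ (1:ℝ), dφ ξ = dφ 1 + ∫ t in (1:ℝ)..ξ, w t) →
      (∀ᵐ ξ : ℝ, 1 ≤ ξ → -(w ξ) + W ξ * φ ξ = φ ξ) →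
      ∀ L ≥ (2:ℝ),
        (∫ ξ in (1:ℝ)..L, (φ ξ)^2) ≤ (∫ ξ in (1:ℝ)..L, ((φ ξ)^2 + (dφ ξ)^2)) ∧
        (∫ ξ in (1:ℝ)..L, ((φ ξ)^2 + (dφ ξ)^2)) ≤ C * ∫ ξ in (1:ℝ)..L, (φ ξ)^2 := by
  refine ⟨8 * growthConst (M + 1) ^ 3 * (9 + (M + 1)) ^ 3, ?_⟩
  intro W φ dφ w _ hW hφ hwi hdφ hode L hL
  have hK : 0 ≤ M + 1 := by linarith [(abs_nonneg _).trans (hW 1 le_rfl)]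
  have hsol : IsDominatedSolution (M + 1) 1 φ dφ :=
    .of_integral hK hφ (hwi 1 le_rfl) hdφ <| by
      filter_upwards [hode] with ξ hξ h1
      exact abs_le_add_one_mul_of_neg_add_mul_eq (hξ h1) (hW ξ h1)
  have hφ2 : ContinuousOn (fun ξ => φ ξ ^ 2) (Ici 1) := hsol.continuousOn.pow 2
  refine ⟨intervalIntegral.integral_mono_on (by linarith)
    (intervalIntegrable_of_continuousOn_Ici hφ2 le_rfl (by linarith))
    (intervalIntegrable_of_continuousOn_Ici hsol.continuousOn_sq_add_sq le_rfl (by linarith))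
    fun ξ _ => le_add_of_nonneg_right (sq_nonneg _), ?_⟩
  exact integral_le_mul_integral_of_forall_short hsol.continuousOn_sq_add_sq hφ2 (by linarith)
    fun s hs l hl => hsol.integral_sq_add_sq_le hK hs hl

/-- Elliptic-regularity type bound: for a bounded potential `W` (`|W| ≤ M` on `[1,∞)`),
there is a constant `C = C(M)` such that every solution `φ` of `-φ'' + W φ = φ` on `[1,∞)`
(continuously differentiable with locally absolutely continuous derivative `dφ`, second
derivative `w`) satisfies `∫₁^L φ² ≤ ∫₁^L (φ² + φ'²) ≤ C ∫₁^L φ²` for every `L ≥ 2`. -/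
theorem stmt_15 (M : ℝ) (hM : 0 < M) :
    ∃ C : ℝ, ∀ W φ dφ w : ℝ → ℝ,
      Measurable W → (∀ ξ ≥ (1:ℝ), |W ξ| ≤ M) →
      (∀ ξ ≥ (1:ℝ), HasDerivAt φ (dφ ξ) ξ) →
      (∀ a ≥ (1:ℝ), ∀ b ≥ (1:ℝ), IntervalIntegrable w volume a b) →
      (∀ ξ ≥ (1:ℝ), dφ ξ = dφ 1 + ∫ t in (1:ℝ)..ξ, w t) →
      (∀ᵐ ξ : ℝ, 1 ≤ ξ → -(w ξ) + W ξ * φ ξ = φ ξ) →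
      ∀ L ≥ (2:ℝ),
        (∫ ξ in (1:ℝ)..L, (φ ξ)^2) ≤ (∫ ξ in (1:ℝ)..L, ((φ ξ)^2 + (dφ ξ)^2)) ∧
        (∫ ξ in (1:ℝ)..L, ((φ ξ)^2 + (dφ ξ)^2)) ≤ C * ∫ ξ in (1:ℝ)..L, (φ ξ)^2 :=
  stmt_15_general M
end
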